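/- arXiv:math/0103082 — 3 statements merged into one kernel-verified Lean document; each statement's English description precedes it below -/
import Mathlib

section
/- Let V be a finite-dimensional vector space over a field F, G a group, and ρ : G → Aut_F(V) a very simple representation with dim_F V > 1. Then V is an absolutely simple G-module. -/
/-!
Both halves come from applying very simplicity to a subalgebra of `End_F(V)` that contains
`ρ(G)`, hence is stable under conjugation by it. For a `G`-invariant subspace `W` this is the
stabilizer of `W`: if `0 ≠ W ≠ V` it contains the rank-one maps with image in `W`, which are not
scalars, but not a rank-one map carrying a vector of `W` outside `W`. For an equivariant `f` it
is the centralizer of `f`: it contains `f`, and if it is everything then `f` is central in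
`End_F(V)`, hence a scalar.
-/

/-- A representation `ρ : G → Aut_F(V)` is *very simple* if every `F`-subalgebra
`R ⊆ End_F(V)` containing `Id` and stable under conjugation by all `ρ(σ)` equals
`F·Id` or `End_F(V)`. -/
def VerySimple {F V G : Type*} [Field F] [AddCommGroup V] [Module F V] [Group G]
    (ρ : Representation F G V) : Prop :=
  ∀ R : Subalgebra F (Module.End F V),
    (∀ σ : G, ∀ r ∈ R, ρ σ ∘ₗ r ∘ₗ ρ σ⁻¹ ∈ R) → R = ⊥ ∨ R = ⊤

theorem VerySimple.eq_bot_or_eq_top_of_forall_mem {F V G : Type*} [Field F] [AddCommGroup V]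
    [Module F V] [Group G] {ρ : Representation F G V} (hρ : VerySimple ρ)
    {R : Subalgebra F (Module.End F V)} (hR : ∀ σ, ρ σ ∈ R) : R = ⊥ ∨ R = ⊤ :=
  hρ R fun σ _ hr ↦ mul_mem (hR σ) (mul_mem hr (hR σ⁻¹))

theorem Algebra.IsCentral.mem_bot_of_centralizer_singleton_eq_top {K A : Type*}
    [CommSemiring K] [Semiring A] [Algebra K A] [Algebra.IsCentral K A] {a : A}
    (h : Subalgebra.centralizer K {a} = ⊤) : a ∈ (⊥ : Subalgebra K A) :=
  Algebra.IsCentral.center_eq_bot K A ▸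
    (Subalgebra.centralizer_eq_top_iff_subset K).mp h (Set.mem_singleton a)

namespace Submodule

def stabilizerSubalgebra {R M : Type*} [CommSemiring R] [AddCommMonoid M] [Module R M]
    (p : Submodule R M) : Subalgebra R (Module.End R M) where
  carrier := {f | ∀ v ∈ p, f v ∈ p}
  mul_mem' hf hg v hv := hf _ (hg v hv)
  add_mem' hf hg v hv := p.add_mem (hf v hv) (hg v hv)
  algebraMap_mem' c v hv := by
    simpa [Module.algebraMap_end_eq_smul_id] using p.smul_mem c hv

variable {K V : Type*} [Field K] [AddCommGroup V] [Module K V] {p : Submodule K V}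

theorem stabilizerSubalgebra_ne_bot (hbot : p ≠ ⊥) (htop : p ≠ ⊤) :
    p.stabilizerSubalgebra ≠ ⊥ := by
  obtain ⟨w, hwp, hw⟩ := exists_mem_ne_zero_of_ne_bot hbot
  obtain ⟨v, hvp⟩ := SetLike.exists_not_mem_of_ne_top p htop rfl
  obtain ⟨φ, hφ⟩ := Module.Projective.exists_dual_ne_zero K
    (x := v) fun h ↦ hvp (h ▸ p.zero_mem)
  intro h
  have hmem : φ.smulRight w ∈ p.stabilizerSubalgebra := fun u _ ↦ p.smul_mem _ hwp
  obtain ⟨c, hc⟩ := Algebra.mem_bot.mp (h ▸ hmem)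
  have hcv : φ v • w = c • v := by
    simpa [Module.algebraMap_end_eq_smul_id] using (LinearMap.congr_fun hc v).symm
  have hc0 : c ≠ 0 := by
    rintro rfl
    exact smul_ne_zero hφ hw (hcv.trans (zero_smul K v))
  exact hvp ((p.smul_mem_iff hc0).mp (hcv ▸ p.smul_mem _ hwp))

theorem stabilizerSubalgebra_ne_top (hbot : p ≠ ⊥) (htop : p ≠ ⊤) :
    p.stabilizerSubalgebra ≠ ⊤ := by
  obtain ⟨w, hwp, hw⟩ := exists_mem_ne_zero_of_ne_bot hbot
  obtain ⟨v, hvp⟩ := SetLike.exists_not_mem_of_ne_top p htop rfl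
  obtain ⟨φ, hφ⟩ := Module.Projective.exists_dual_ne_zero K hw
  intro h
  have hmem : φ.smulRight v ∈ p.stabilizerSubalgebra := h ▸ Algebra.mem_top
  exact hvp ((p.smul_mem_iff hφ).mp (hmem w hwp))

end Submodule

theorem verySimple_implies_absolutely_simple_general {F V G : Type*} [Field F] [AddCommGroup V]
    [Module F V] [Group G] (ρ : Representation F G V)
    (hρ : VerySimple ρ) :
    (∀ W : Submodule F V, (∀ σ : G, ∀ v ∈ W, ρ σ v ∈ W) → W = ⊥ ∨ W = ⊤) ∧
    (∀ f : Module.End F V, (∀ σ : G, f ∘ₗ ρ σ = ρ σ ∘ₗ f) →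
      ∃ c : F, f = c • LinearMap.id) := by
  constructor
  · intro W hW
    by_contra! hproper
    rcases hρ.eq_bot_or_eq_top_of_forall_mem (R := W.stabilizerSubalgebra) hW with h | h
    · exact W.stabilizerSubalgebra_ne_bot hproper.1 hproper.2 h
    · exact W.stabilizerSubalgebra_ne_top hproper.1 hproper.2 h
  · intro f hf
    have hf_bot : f ∈ (⊥ : Subalgebra F (Module.End F V)) := by
      rcases hρ.eq_bot_or_eq_top_of_forall_mem (R := Subalgebra.centralizer F {f})
        (fun σ ↦ (Subalgebra.mem_centralizer_iff F).mpr (by rintro _ rfl; exact hf σ)) with h | h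
      · exact h ▸ (Subalgebra.mem_centralizer_iff F).mpr (by rintro _ rfl; rfl)
      · exact Algebra.IsCentral.mem_bot_of_centralizer_singleton_eq_top h
    obtain ⟨c, rfl⟩ := Algebra.mem_bot.mp hf_bot
    exact ⟨c, Module.algebraMap_end_eq_smul_id _ _ _ c⟩

/-- A very simple representation of `F`-dimension `> 1` is absolutely simple:
every `G`-invariant subspace is trivial and every `G`-equivariant endomorphism is a
scalar. -/
theorem verySimple_implies_absolutely_simple {F V G : Type*} [Field F] [AddCommGroup V]
    [Module F V] [FiniteDimensional F V] [Group G] (ρ : Representation F G V)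
    (hρ : VerySimple ρ) (hdim : 1 < Module.finrank F V) :
    (∀ W : Submodule F V, (∀ σ : G, ∀ v ∈ W, ρ σ v ∈ W) → W = ⊥ ∨ W = ⊤) ∧
    (∀ f : Module.End F V, (∀ σ : G, f ∘ₗ ρ σ = ρ σ ∘ₗ f) →
      ∃ c : F, f = c • LinearMap.id) :=
  verySimple_implies_absolutely_simple_general ρ hρ
end

section
/- Let q = 2^m, d ≥ 1, G ≤ GL_d(F_{q'}), and suppose there exist r > (q-1)/3 elements u_1,...,u_r ∈ G whose traces α_1,...,α_r are distinct elements of F_q^*. Then for every proper subset S ⊊ {0,...,m-1} with M = ∑_{i∈S} 2^i, there exists some index i with α_i^M ∉ F_2; consequently the tensor product ρ_S of Frobenius twists contains an element of trace outside F_2 and cannot be defined over F_2. -/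
/-!
The traces `α_i` lie in `F_q^*`, so they are `(q - 1)`-th roots of unity. If all `α_i ^ M`
were `1`, they would be `g`-th roots of unity for `g = gcd(M, q - 1)`, a proper divisor of the
odd number `q - 1`, hence `g ≤ (q - 1) / 3 < r`; but a field has at most `g` such roots.
In characteristic `2` the entrywise `2^j`-th power map is a ring endomorphism, so the trace
of `ρ_S(u)` is `(tr u) ^ M`.
-/

open Finset

theorem Nat.three_mul_le_of_dvd_of_ne {n g : ℕ} (hn : Odd n) (hg : g ∣ n) (hne : g ≠ n) :
    3 * g ≤ n := by
  obtain ⟨k, rfl⟩ := hg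
  have hk0 : k ≠ 0 := by rintro rfl; simp at hn
  have hk1 : k ≠ 1 := by rintro rfl; simp at hne
  have hk2 : k ≠ 2 := by rintro rfl; exact Nat.not_even_iff_odd.mpr hn ⟨g, by ring⟩
  calc 3 * g ≤ k * g := Nat.mul_le_mul_right g (by omega)
    _ = g * k := mul_comm k g

theorem Nat.odd_two_pow_sub_one {m : ℕ} (hm : 0 < m) : Odd (2 ^ m - 1) :=
  Nat.Even.sub_odd Nat.one_le_two_pow (Nat.even_pow.mpr ⟨even_two, hm.ne'⟩) odd_one

theorem Finset.sum_two_pow_lt_of_ssubset_range {S : Finset ℕ} {m : ℕ} (hS : S ⊂ range m) :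
    ∑ j ∈ S, 2 ^ j < 2 ^ m - 1 := by
  obtain ⟨j, hjm, hjS⟩ := exists_of_ssubset hS
  calc ∑ j ∈ S, 2 ^ j < ∑ j ∈ range m, 2 ^ j :=
        sum_lt_sum_of_subset hS.subset hjm hjS (by positivity) fun _ _ _ => Nat.zero_le _
    _ = 2 ^ m - 1 := by simp [Nat.geomSum_eq le_rfl]

theorem pow_pred_eq_one_of_pow_eq_self {M₀ : Type*} [MonoidWithZero M₀]
    [IsRightCancelMulZero M₀] {a : M₀} (ha : a ≠ 0) {n : ℕ} (hn : 0 < n) (h : a ^ n = a) :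
    a ^ (n - 1) = 1 :=
  mul_right_cancel₀ ha <| by rw [one_mul, ← pow_succ, Nat.sub_add_cancel hn, h]

theorem Fintype.card_le_of_injective_of_pow_eq_one {K ι : Type*} [CommRing K] [IsDomain K]
    [Fintype ι] {α : ι → K} (hα : Function.Injective α) {n : ℕ} (hn : 0 < n)
    (h : ∀ i, α i ^ n = 1) : Fintype.card ι ≤ n := by
  classical
  calc Fintype.card ι = (univ.image α).card := (card_image_of_injective _ hα).symm
    _ ≤ (Polynomial.nthRootsFinset n (1 : K)).card :=
        card_le_card fun x hx => by
          obtain ⟨i, -, rfl⟩ := mem_image.mp hx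
          exact (Polynomial.mem_nthRootsFinset hn 1).mpr (h i)
    _ ≤ Multiset.card (Polynomial.nthRoots n (1 : K)) := by
        rw [Polynomial.nthRootsFinset_def]; exact Multiset.toFinset_card_le _
    _ ≤ n := Polynomial.card_nthRoots n 1

theorem exists_pow_ne_one_of_odd_of_lt_three_mul_card {K ι : Type*} [CommRing K] [IsDomain K]
    [Fintype ι] {α : ι → K} (hα : Function.Injective α) {N M : ℕ} (hN : Odd N)
    (hroot : ∀ i, α i ^ N = 1) (hcard : N < 3 * Fintype.card ι) (hM : 0 < M) (hMN : M < N) :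
    ∃ i, α i ^ M ≠ 1 := by
  by_contra! h
  have hg : 0 < M.gcd N := Nat.gcd_pos_of_pos_left N hM
  have hgM : M.gcd N ≤ M := Nat.le_of_dvd hM (Nat.gcd_dvd_left M N)
  have h3g : 3 * M.gcd N ≤ N :=
    Nat.three_mul_le_of_dvd_of_ne hN (Nat.gcd_dvd_right M N) (by omega)
  have hcard_le : Fintype.card ι ≤ M.gcd N :=
    Fintype.card_le_of_injective_of_pow_eq_one hα hg fun i => pow_gcd_eq_one.mpr ⟨h i, hroot i⟩
  omega

theorem Matrix.trace_map_pow_char_pow {n R : Type*} [Fintype n] [CommSemiring R] (p : ℕ)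
    [ExpChar R p] (k : ℕ) (A : Matrix n n R) :
    (A.map fun a => a ^ p ^ k).trace = A.trace ^ p ^ k :=
  (AddMonoidHom.map_trace (iterateFrobenius R p k) A).symm

theorem Matrix.prod_trace_map_pow_char_pow {n R : Type*} [Fintype n] [CommSemiring R] (p : ℕ)
    [ExpChar R p] (S : Finset ℕ) (A : Matrix n n R) :
    ∏ j ∈ S, (A.map fun a => a ^ p ^ j).trace = A.trace ^ ∑ j ∈ S, p ^ j := by
  simp only [trace_map_pow_char_pow, prod_pow_eq_pow_sum]

theorem frobenius_tensor_not_over_F2_general (m e d : ℕ) (hm : 0 < m)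
    (K : Type*) [Field K] [Fintype K] (hK : Fintype.card K = 2 ^ (m * e))
    (r : ℕ) (hr : 2 ^ m - 1 < 3 * r)
    (u : Fin r → Matrix (Fin d) (Fin d) K)
    (α : Fin r → K) (htr : ∀ i, (u i).trace = α i)
    (hα0 : ∀ i, α i ≠ 0) (hαq : ∀ i, (α i) ^ 2 ^ m = α i)
    (hdist : Function.Injective α)
    (S : Finset ℕ) (hS : S ⊆ Finset.range m) (hSne : S.Nonempty)
    (hSprop : S ≠ Finset.range m) :
    ∃ i : Fin r, (α i ^ (∑ j ∈ S, 2 ^ j) ≠ 0 ∧ α i ^ (∑ j ∈ S, 2 ^ j) ≠ 1) ∧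
      (∏ j ∈ S, ((u i).map fun a => a ^ 2 ^ j).trace) ∉ ({0, 1} : Set K) := by
  have : Fact (Nat.Prime 2) := ⟨Nat.prime_two⟩
  have : CharP K 2 := charP_of_card_eq_prime_pow hK
  have hroot : ∀ i, α i ^ (2 ^ m - 1) = 1 := fun i =>
    pow_pred_eq_one_of_pow_eq_self (hα0 i) Nat.one_le_two_pow (hαq i)
  obtain ⟨i, hi⟩ := exists_pow_ne_one_of_odd_of_lt_three_mul_card hdist
    (Nat.odd_two_pow_sub_one hm) hroot (by simpa using hr) (sum_pos (fun j _ => by positivity) hSne)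
    (sum_two_pow_lt_of_ssubset_range (hS.ssubset_of_ne hSprop))
  have hi0 : α i ^ (∑ j ∈ S, 2 ^ j) ≠ 0 := pow_ne_zero _ (hα0 i)
  refine ⟨i, ⟨hi0, hi⟩, ?_⟩
  rw [Matrix.prod_trace_map_pow_char_pow, htr]
  rintro (h | h) <;> contradiction

/-- Let `q = 2^m`, let `K` be a field with `q' = q^e` elements, and suppose there are
`r > (q-1)/3` matrices `u_1,…,u_r ∈ GL_d(K)` whose traces `α_1,…,α_r` are distinct
elements of `F_q^*`.  Then for every proper nonempty subset `S ⊊ {0,…,m-1}` with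
`M = ∑_{i∈S} 2^i` there is an index `i` with `α_i^M ∉ F_2 = {0,1}`; consequently the
tensor product `ρ_S` of Frobenius twists (whose trace at `u_i` is the product of the
traces of the entrywise `2^j`-th power matrices) takes at `u_i` a value outside `F_2`,
hence `ρ_S` cannot be defined over `F_2`. -/
theorem frobenius_tensor_not_over_F2 (m e d : ℕ) (hm : 0 < m) (he : 0 < e) (hd : 0 < d)
    (K : Type*) [Field K] [Fintype K] (hK : Fintype.card K = 2 ^ (m * e))
    (r : ℕ) (hr : 2 ^ m - 1 < 3 * r)
    (u : Fin r → Matrix (Fin d) (Fin d) K) (hu : ∀ i, IsUnit (u i))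
    (α : Fin r → K) (htr : ∀ i, (u i).trace = α i)
    (hα0 : ∀ i, α i ≠ 0) (hαq : ∀ i, (α i) ^ 2 ^ m = α i)
    (hdist : Function.Injective α)
    (S : Finset ℕ) (hS : S ⊆ Finset.range m) (hSne : S.Nonempty)
    (hSprop : S ≠ Finset.range m) :
    ∃ i : Fin r, (α i ^ (∑ j ∈ S, 2 ^ j) ≠ 0 ∧ α i ^ (∑ j ∈ S, 2 ^ j) ≠ 1) ∧
      (∏ j ∈ S, ((u i).map fun a => a ^ 2 ^ j).trace) ∉ ({0, 1} : Set K) :=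
  frobenius_tensor_not_over_F2_general m e d hm K hK r hr u α htr hα0 hαq hdist S hS hSne hSprop
end

section
/- Let G be a group acting doubly transitively on a finite set B with #B odd, and suppose #B - 1 equals the largest power of 2 dividing #G. Then the F_2[G]-module Q_B = {h : B → F_2 | ∑_b h(b) = 0} is absolutely simple. -/
/-- The subspace of functions `B → F` whose values sum to zero. -/
def sumZeroFns (F : Type*) [Field F] (B : Type*) [Fintype B] : Submodule F (B → F) where
  carrier := {h | ∑ b, h b = 0}
  add_mem' := by
    intro a b ha hb
    simp only [Set.mem_setOf_eq] at *
    simp [Finset.sum_add_distrib, ha, hb]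
  zero_mem' := by simp
  smul_mem' := by
    intro c a ha
    simp only [Set.mem_setOf_eq, Pi.smul_apply, smul_eq_mul] at *
    simp [← Finset.mul_sum, ha]

private lemma zmod2_eq_one : ∀ z : ZMod 2, z ≠ 0 → z = 1 := by decide

private lemma mem_sumZeroFns_iff {F : Type*} [Field F] {B : Type*} [Fintype B]
    (h : B → F) : h ∈ sumZeroFns F B ↔ ∑ b, h b = 0 := Iff.rfl

section Aux

variable {B : Type*} [Fintype B] {G : Type*} [Group G] [Finite G] [MulAction G B]

/-- transitivity from double transitivity -/
private lemma aux_trans (hcard : 2 ≤ Fintype.card B)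
    (hdt : ∀ a b c d : B, a ≠ b → c ≠ d → ∃ g : G, g • a = c ∧ g • b = d)
    (a c : B) : ∃ g : G, g • a = c := by
  by_cases hac : a = c
  · exact ⟨1, by simp [hac]⟩
  · exact (hdt a c c a hac (Ne.symm hac)).imp fun g hg => hg.1

/-- the action of `G` on the nonzero elements of an invariant submodule -/
private def nzAction (W : Submodule (ZMod 2) (B → ZMod 2))
    (hW : ∀ g : G, ∀ h ∈ W, (fun b => h (g⁻¹ • b)) ∈ W) :
    MulAction G {h : B → ZMod 2 // h ∈ W ∧ h ≠ 0} where
  smul g h := ⟨fun b => h.1 (g⁻¹ • b), hW g h.1 h.2.1, fun hz => h.2.2 (by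
      funext b
      have := congrFun hz (g • b)
      simpa using this)⟩
  one_smul h := Subtype.ext (by
    show (fun b => h.1 ((1:G)⁻¹ • b)) = h.1
    funext b; simp)
  mul_smul g g' h := Subtype.ext (by
    show (fun b => h.1 ((g * g')⁻¹ • b)) = (fun b => (fun b' => h.1 (g'⁻¹ • b')) (g⁻¹ • b))
    funext b; simp [mul_smul])

/-- the sum-zero functions are spanned by the differences of indicators -/
private lemma spanning [DecidableEq B] (W : Submodule (ZMod 2) (B → ZMod 2)) (b₀ : B)
    (hχ : ∀ b : B, (fun x => if x = b then (0 : ZMod 2) else 1) ∈ W) :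
    sumZeroFns (ZMod 2) B ≤ W := by
  classical
  intro h hh
  rw [mem_sumZeroFns_iff] at hh
  have key : h = ∑ b, h b • ((fun x => if x = b then (0 : ZMod 2) else 1)
      + (fun x => if x = b₀ then (0 : ZMod 2) else 1)) := by
    funext x
    have hite : ∀ (c : Prop) [Decidable c],
        (if c then (0 : ZMod 2) else 1) = 1 + (if c then 1 else 0) := by
      intro c _; split <;> decide
    rw [Finset.sum_apply]
    simp only [Pi.add_apply, Pi.smul_apply, smul_eq_mul, hite]
    have key2 : ∀ z u v : ZMod 2, z * ((1 + u) + (1 + v)) = z * u + z * v := by decide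
    have : ∀ b : B, h b * ((1 + if x = b then (1:ZMod 2) else 0)
        + (1 + if x = b₀ then (1:ZMod 2) else 0))
        = h b * (if x = b then (1:ZMod 2) else 0) + h b * (if x = b₀ then (1:ZMod 2) else 0) :=
      fun b => key2 _ _ _
    rw [Finset.sum_congr rfl (fun b _ => this b), Finset.sum_add_distrib, ← Finset.sum_mul, hh,
      zero_mul, add_zero]
    simp [mul_ite, Finset.sum_ite_eq]
  rw [key]
  exact Submodule.sum_mem _ fun b _ =>
    Submodule.smul_mem _ _ (Submodule.add_mem _ (hχ b) (hχ b₀))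

/-- Part 1: invariant subspaces are trivial. -/
private lemma part1 (hodd : Odd (Fintype.card B)) (hcard : 2 ≤ Fintype.card B)
    (hdt : ∀ a b c d : B, a ≠ b → c ≠ d → ∃ g : G, g • a = c ∧ g • b = d)
    (hSt : Fintype.card B - 1 = 2 ^ ((Nat.card G).factorization 2))
    (W : Submodule (ZMod 2) (B → ZMod 2)) (hle : W ≤ sumZeroFns (ZMod 2) B)
    (hinv : ∀ g : G, ∀ h ∈ W, (fun b => h (g⁻¹ • b)) ∈ W) :
    W = ⊥ ∨ W = sumZeroFns (ZMod 2) B := by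
  classical
  by_cases hbot : W = ⊥
  · exact Or.inl hbot
  right
  letI : Fintype G := Fintype.ofFinite G
  haveI : Fact (Nat.Prime 2) := ⟨Nat.prime_two⟩
  set n := Fintype.card B with hn
  set k := (Nat.card G).factorization 2 with hk
  have hn3 : 3 ≤ n := by
    rcases hodd with ⟨m, hm⟩; omega
  have hndvd : ¬ (2 ∣ n) := by
    rcases hodd with ⟨m, hm⟩; omega
  -- Sylow 2-subgroup
  obtain ⟨P⟩ : Nonempty (Sylow 2 G) := inferInstance
  have hPcard : Nat.card ↥(P : Subgroup G) = 2 ^ k := P.card_eq_multiplicity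
  -- fixed point of P on B
  obtain ⟨b₀, hb₀⟩ := (P.isPGroup').nonempty_fixed_point_of_prime_not_dvd_card B
    (by rwa [Nat.card_eq_fintype_card])
  have hb₀' : ∀ p : ↥(P : Subgroup G), (p : G) • b₀ = b₀ := fun p => hb₀ p
  -- any element of P fixing some x ≠ b₀ is trivial
  have hfree : ∀ x : B, x ≠ b₀ → ∀ p : ↥(P : Subgroup G), (p : G) • x = x → p = 1 := by
    intro x hx p hpx
    -- the stabilizer of the pair (b₀, x) has odd order
    set K : Subgroup G := MulAction.stabilizer G b₀ ⊓ MulAction.stabilizer G x with hK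
    have hKodd : ¬ (2 ∣ Nat.card ↥K) := by
      have hstab : MulAction.stabilizer G (b₀, x) = K := by
        ext g
        simp [MulAction.mem_stabilizer_iff, hK, Subgroup.mem_inf, Prod.ext_iff]
      have horb : MulAction.orbit G (b₀, x) = {p : B × B | p.1 ≠ p.2} := by
        ext ⟨c, d⟩
        constructor
        · rintro ⟨g, hg⟩
          have hg' : g • b₀ = c ∧ g • x = d := by
            simpa [Prod.ext_iff] using hg
          simp only [Set.mem_setOf_eq]
          intro hcd
          apply hx
          apply smul_left_cancel g
          rw [hg'.1, hg'.2, hcd]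
        · intro hcd
          obtain ⟨g, hg1, hg2⟩ := hdt b₀ x c d (Ne.symm hx) hcd
          exact ⟨g, by simp [Prod.smul_mk, hg1, hg2]⟩
      have hcardorb : Nat.card ↥(MulAction.orbit G (b₀, x)) = (n - 1) * n := by
        rw [horb]
        have e1 : Nat.card ↥{p : B × B | p.1 ≠ p.2}
            = Fintype.card {p : B × B // ¬ (p.1 = p.2)} := Nat.card_eq_fintype_card
        rw [e1, Fintype.card_subtype_compl]
        have e2 : Fintype.card {p : B × B // p.1 = p.2} = n := by
          exact Fintype.card_congr ⟨fun p => p.1.1, fun b => ⟨(b, b), rfl⟩,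
            fun p => Subtype.ext (Prod.ext rfl p.2), fun b => rfl⟩
        rw [e2, Fintype.card_prod, ← hn, Nat.sub_one_mul]
      -- orbit–stabilizer
      have hos : Nat.card ↥(MulAction.orbit G (b₀, x)) * Nat.card ↥(MulAction.stabilizer G (b₀, x))
          = Nat.card G := by
        rw [Nat.card_eq_fintype_card, Nat.card_eq_fintype_card, Nat.card_eq_fintype_card]
        exact MulAction.card_orbit_mul_card_stabilizer_eq_card_group G (b₀, x)
      rw [hcardorb, hstab] at hos
      intro h2K
      have hKpos : Nat.card ↥K ≠ 0 := Nat.card_pos.ne'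
      have hGfact : (Nat.card G).factorization 2 = k := rfl
      have : ((n - 1) * n * Nat.card ↥K).factorization 2 = k := by rw [hos, hGfact]
      rw [Nat.factorization_mul (Nat.mul_ne_zero (by omega) (by omega)) hKpos,
        Nat.factorization_mul (by omega) (by omega)] at this
      have hfn1 : (n - 1).factorization 2 = k := by
        rw [hSt, Nat.Prime.factorization_pow Nat.prime_two, Finsupp.single_eq_same]
      have hfn : n.factorization 2 = 0 := Nat.factorization_eq_zero_of_not_dvd hndvd
      have hfK : 0 < (Nat.card ↥K).factorization 2 :=
        Nat.Prime.factorization_pos_of_dvd Nat.prime_two hKpos h2K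
      simp only [Finsupp.coe_add, Pi.add_apply, hfn1, hfn] at this
      omega
    -- p lies in K, its order is a power of 2 and divides an odd number
    have hpK : (p : G) ∈ K := Subgroup.mem_inf.mpr ⟨hb₀' p, hpx⟩
    obtain ⟨m, hm⟩ := P.isPGroup' p
    have hord2 : orderOf (p : G) ∣ 2 ^ m := by
      apply orderOf_dvd_of_pow_eq_one
      have : ((p ^ 2 ^ m : ↥(P : Subgroup G)) : G) = ((1 : ↥(P : Subgroup G)) : G) := by
        rw [hm]
      simpa using this
    have hordK : orderOf (p : G) ∣ Nat.card ↥K := by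
      have h1 : orderOf ((⟨(p : G), hpK⟩ : ↥K) : G) ∣ Nat.card ↥K := by
        rw [Subgroup.orderOf_coe]
        exact orderOf_dvd_natCard _
      exact h1
    obtain ⟨j, hj, hje⟩ := (Nat.dvd_prime_pow Nat.prime_two).mp hord2
    have hj0 : j = 0 := by
      by_contra hj0
      exact hKodd (dvd_trans (dvd_trans (dvd_pow_self 2 hj0) (hje ▸ dvd_refl _)) hordK)
    have : orderOf (p : G) = 1 := by rw [hje, hj0, pow_zero]
    have hp1 : (p : G) = 1 := orderOf_eq_one_iff.mp this
    exact Subtype.ext hp1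
  -- P acts transitively on B \ {b₀}
  have ptrans : ∀ x y : B, x ≠ b₀ → y ≠ b₀ → ∃ p : ↥(P : Subgroup G), (p : G) • x = y := by
    intro x y hx hy
    have hstabbot : MulAction.stabilizer ↥(P : Subgroup G) x = ⊥ := by
      ext p
      simp only [MulAction.mem_stabilizer_iff, Subgroup.mem_bot]
      exact ⟨fun h => hfree x hx p h, fun h => by rw [h]; simp⟩
    have hcardorb : Nat.card ↥(MulAction.orbit ↥(P : Subgroup G) x) = 2 ^ k := by
      rw [Nat.card_congr (MulAction.orbitEquivQuotientStabilizer ↥(P : Subgroup G) x),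
        hstabbot, ← hPcard]
      exact Nat.card_congr (QuotientGroup.quotientBot (G := ↥(P : Subgroup G))).toEquiv
    have hsub : MulAction.orbit ↥(P : Subgroup G) x ⊆ {y : B | y ≠ b₀} := by
      rintro y ⟨p, hp⟩
      simp only [Set.mem_setOf_eq]
      intro hyb
      apply hx
      have h2 : (p : G) • x = y := hp
      rw [hyb] at h2
      have h3 : x = ((p : G))⁻¹ • b₀ := by
        rw [← h2, inv_smul_smul]
      rw [h3]
      have h4 := hb₀' p⁻¹
      simpa using h4
    have hcardcompl : Nat.card ↥{y : B | y ≠ b₀} = 2 ^ k := by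
      have : Nat.card ↥{y : B | y ≠ b₀} = Fintype.card {y : B // ¬ (y = b₀)} :=
        Nat.card_eq_fintype_card
      rw [this, Fintype.card_subtype_compl, Fintype.card_subtype_eq, ← hn, ← hSt]
    have horb : MulAction.orbit ↥(P : Subgroup G) x = {y : B | y ≠ b₀} := by
      apply Set.eq_of_subset_of_ncard_le hsub
      rw [← Nat.card_coe_set_eq, ← Nat.card_coe_set_eq, hcardorb, hcardcompl]
    have : y ∈ MulAction.orbit ↥(P : Subgroup G) x := by rw [horb]; exact hy
    exact this
  -- W contains a nonzero P-fixed vector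
  letI actG : MulAction G {h : B → ZMod 2 // h ∈ W ∧ h ≠ 0} := nzAction W hinv
  have hα : ¬ (2 ∣ Nat.card {h : B → ZMod 2 // h ∈ W ∧ h ≠ 0}) := by
    have e : {h : B → ZMod 2 // h ∈ W ∧ h ≠ 0} ≃ {x : ↥W // x ≠ 0} :=
      ⟨fun h => ⟨⟨h.1, h.2.1⟩, fun hz => h.2.2 (by
          simpa [Submodule.mk_eq_zero] using hz)⟩,
       fun x => ⟨x.1.1, x.1.2, fun hz => x.2 (by
          exact Subtype.ext hz)⟩,
       fun h => rfl, fun x => rfl⟩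
    haveI : Nontrivial ↥W := Submodule.nontrivial_iff_ne_bot.mpr hbot
    have hcardW : Fintype.card ↥W = 2 ^ Module.finrank (ZMod 2) ↥W := by
      have := Module.card_eq_pow_finrank (K := ZMod 2) (V := ↥W)
      rwa [ZMod.card] at this
    have hrank : 0 < Module.finrank (ZMod 2) ↥W := Module.finrank_pos
    have hcard' : Nat.card {x : ↥W // x ≠ 0} = 2 ^ Module.finrank (ZMod 2) ↥W - 1 := by
      rw [Nat.card_eq_fintype_card, Fintype.card_subtype_compl, Fintype.card_subtype_eq, hcardW]
    rw [Nat.card_congr e, hcard']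
    have h1 : 1 ≤ 2 ^ (Module.finrank (ZMod 2) ↥W - 1) := Nat.one_le_two_pow
    have h2 : 2 ^ Module.finrank (ZMod 2) ↥W = 2 * 2 ^ (Module.finrank (ZMod 2) ↥W - 1) := by
      rw [← pow_succ']
      congr 1
      omega
    omega
  obtain ⟨w, hw⟩ := (P.isPGroup').nonempty_fixed_point_of_prime_not_dvd_card
    {h : B → ZMod 2 // h ∈ W ∧ h ≠ 0} hα
  have hwfix : ∀ p : ↥(P : Subgroup G), ∀ b : B, w.1 ((p : G)⁻¹ • b) = w.1 b := by
    intro p b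
    have h1 : ((p : G) • w).1 = w.1 := congrArg Subtype.val (hw p)
    exact congrFun h1 b
  -- identify the fixed vector
  obtain ⟨x₁, hx₁⟩ := Fintype.exists_ne_of_one_lt_card (by omega) b₀
  set a := w.1 x₁ with ha
  have hconst : ∀ x : B, x ≠ b₀ → w.1 x = a := by
    intro x hx
    obtain ⟨p, hp⟩ := ptrans x₁ x hx₁ hx
    rw [ha, ← hp]
    have := hwfix p ((p : G) • x₁)
    simpa using this.symm
  have hsum : ∑ b, w.1 b = 0 := (mem_sumZeroFns_iff w.1).mp (hle w.2.1)
  have hwb₀ : w.1 b₀ = 0 := by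
    have hsplit : ∑ b, w.1 b = w.1 b₀ + ∑ b ∈ Finset.univ.erase b₀, w.1 b := by
      rw [Finset.add_sum_erase _ _ (Finset.mem_univ b₀)]
    have hsum2 : ∑ b ∈ Finset.univ.erase b₀, w.1 b = (n - 1) • a := by
      rw [Finset.sum_congr rfl (fun b hb => hconst b (Finset.ne_of_mem_erase hb)),
        Finset.sum_const, Finset.card_erase_of_mem (Finset.mem_univ b₀), Finset.card_univ]
    have hzero : (n - 1) • a = 0 := by
      rw [nsmul_eq_mul, hSt]
      have : ((2 ^ k : ℕ) : ZMod 2) = 0 := by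
        rw [ZMod.natCast_eq_zero_iff]
        exact dvd_pow_self 2 (by
          have : 2 ≤ 2 ^ k := by omega
          intro hk0
          rw [hk0] at this
          omega)
      rw [this, zero_mul]
    rw [hsplit, hsum2, hzero, add_zero] at hsum
    exact hsum
  have ha1 : a = 1 := by
    apply zmod2_eq_one
    intro ha0
    apply w.2.2
    funext b
    by_cases hb : b = b₀
    · rw [hb, hwb₀]; rfl
    · rw [hconst b hb, ha0]; rfl
  have hw1 : w.1 = fun b => if b = b₀ then (0 : ZMod 2) else 1 := by
    funext b
    by_cases hb : b = b₀
    · rw [hb, hwb₀]; simp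
    · rw [hconst b hb, ha1, if_neg hb]
  -- all indicator-complements lie in W
  have hχ : ∀ b : B, (fun x => if x = b then (0 : ZMod 2) else 1) ∈ W := by
    intro b
    obtain ⟨g, hg⟩ := aux_trans hcard hdt b₀ b
    have := hinv g w.1 w.2.1
    rw [hw1] at this
    convert this using 1
    funext x
    have : g⁻¹ • x = b₀ ↔ x = b := by
      rw [inv_smul_eq_iff, hg]
    simp only [this]
  exact le_antisymm hle (spanning W b₀ hχ)

/-- Part 2: equivariant endomorphisms are scalars. -/
private lemma part2 (hcard : 2 ≤ Fintype.card B)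
    (hdt : ∀ a b c d : B, a ≠ b → c ≠ d → ∃ g : G, g • a = c ∧ g • b = d)
    (f : (B → ZMod 2) →ₗ[ZMod 2] (B → ZMod 2))
    (hEq : ∀ g : G, ∀ h : B → ZMod 2, f (fun b => h (g⁻¹ • b)) = fun b => f h (g⁻¹ • b)) :
    ∃ c : ZMod 2, ∀ h ∈ sumZeroFns (ZMod 2) B, f h = c • h := by
  classical
  set δ : B → (B → ZMod 2) := fun c b => if b = c then 1 else 0 with hδ
  set M : B → B → ZMod 2 := fun b c => f (δ c) b with hM
  -- f is given by the matrix M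
  have hmatrix : ∀ (h : B → ZMod 2) (b : B), f h b = ∑ c, h c * M b c := by
    intro h b
    have hrep : h = ∑ c, h c • δ c := by
      funext x
      rw [Finset.sum_apply]
      simp only [Pi.smul_apply, smul_eq_mul, hδ, mul_ite, mul_one, mul_zero]
      simp [Finset.sum_ite_eq]
    conv_lhs => rw [hrep]
    rw [map_sum]
    simp only [map_smul]
    rw [Finset.sum_apply]
    simp [smul_eq_mul, hM]
  -- equivariance of the matrix
  have hMeq : ∀ (g : G) (b c : B), M (g • b) (g • c) = M b c := by
    intro g b c
    have h1 : (fun b => δ c (g⁻¹ • b)) = δ (g • c) := by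
      funext x
      simp only [hδ]
      have hiff : (g⁻¹ • x = c) ↔ (x = g • c) := inv_smul_eq_iff
      rw [if_congr hiff rfl rfl]
    have h2 := hEq g (δ c)
    rw [h1] at h2
    have := congrFun h2 (g • b)
    simpa [hM, inv_smul_smul] using this
  obtain ⟨b₁, c₁, hbc⟩ := Fintype.exists_pair_of_one_lt_card (α := B) (by omega)
  set α := M b₁ c₁ with hα
  set β := M b₁ b₁ with hβ
  have hoff : ∀ b c : B, b ≠ c → M b c = α := by
    intro b c hbcne
    obtain ⟨g, hg1, hg2⟩ := hdt b₁ c₁ b c hbc hbcne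
    rw [hα, ← hg1, ← hg2, hMeq]
  have hdiag : ∀ b : B, M b b = β := by
    intro b
    obtain ⟨g, hg⟩ := aux_trans hcard hdt b₁ b
    rw [hβ, ← hg, hMeq]
  refine ⟨β - α, fun h hh => ?_⟩
  rw [mem_sumZeroFns_iff] at hh
  funext b
  rw [hmatrix h b]
  rw [← Finset.add_sum_erase _ _ (Finset.mem_univ b)]
  have herase : ∑ c ∈ Finset.univ.erase b, h c * M b c = (∑ c ∈ Finset.univ.erase b, h c) * α := by
    rw [Finset.sum_mul]
    apply Finset.sum_congr rfl
    intro c hc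
    rw [hoff b c (Ne.symm (Finset.ne_of_mem_erase hc))]
  rw [herase, Finset.sum_erase_eq_sub (Finset.mem_univ b), hh, hdiag]
  simp only [Pi.smul_apply, smul_eq_mul]
  ring

end Aux

/-- Let `G` be a finite group acting doubly transitively on a finite set `B` of odd
cardinality, and suppose `#B - 1` equals the largest power of `2` dividing `#G`.
Then the `F_2[G]`-module `Q_B = {h : B → F_2 | ∑ h(b) = 0}` (with action
`(g·h)(b) = h(g⁻¹ b)`) is absolutely simple: every `G`-invariant subspace of it is
trivial and every `G`-equivariant endomorphism of it is a scalar. -/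
theorem QB_absolutely_simple (B : Type*) [Fintype B] (G : Type*) [Group G] [Finite G]
    [MulAction G B] (hodd : Odd (Fintype.card B)) (hcard : 2 ≤ Fintype.card B)
    (hdt : ∀ a b c d : B, a ≠ b → c ≠ d → ∃ g : G, g • a = c ∧ g • b = d)
    (hSt : Fintype.card B - 1 = 2 ^ ((Nat.card G).factorization 2)) :
    (∀ W : Submodule (ZMod 2) (B → ZMod 2), W ≤ sumZeroFns (ZMod 2) B →
      (∀ g : G, ∀ h ∈ W, (fun b => h (g⁻¹ • b)) ∈ W) →
      W = ⊥ ∨ W = sumZeroFns (ZMod 2) B) ∧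
    (∀ f : (B → ZMod 2) →ₗ[ZMod 2] (B → ZMod 2),
      (∀ h ∈ sumZeroFns (ZMod 2) B, f h ∈ sumZeroFns (ZMod 2) B) →
      (∀ g : G, ∀ h : B → ZMod 2, f (fun b => h (g⁻¹ • b)) = fun b => f h (g⁻¹ • b)) →
      ∃ c : ZMod 2, ∀ h ∈ sumZeroFns (ZMod 2) B, f h = c • h) :=
  ⟨fun W hle hinv => part1 hodd hcard hdt hSt W hle hinv,
   fun f _ hEq => part2 hcard hdt f hEq⟩
end
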